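/- Fix h ∈ ℂ and r ∈ ℂ with r ≠ 0. On A = ℂ[x⁰,x¹,x²,x³] set p_μ := −i∂_μ, and let T_r := (1 − rh·p₀)^{−1/r} be the operator defined by the generalized binomial series Σ_{n≥0} binom(−1/r, n)(−rh)ⁿ p₀ⁿ, where binom(α,n) := α(α−1)⋯(α−n+1)/n! (a well-defined operator since ∂₀ is locally nilpotent on polynomials). Define x̂⁰_r := x⁰∘(1 − rh·p₀) and x̂^j_r := x^j∘T_r for j = 1,2,3. Then: (a) [x̂⁰_r, x̂^j_r] = ih·x̂^j_r and [x̂^j_r, x̂^k_r] = 0 (the κ-Minkowski relations); (b) the r-deformed phase-space relations hold: [x̂⁰_r, p₀] = i(1 − rh·p₀), [x̂^j_r, p_k] = i δ^j_k T_r, [x̂⁰_r, p_k] = 0, and [x̂^j_r, p₀] = 0. -/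

import Mathlib

/-!
Everything reduces to the Heisenberg relations `[∂_μ, x^ν] = δ_μ^ν`. An operator
`g(∂₀) = Σ gₙ ∂₀ⁿ` commutes with every `∂_μ` and with `x^j` for `j ≠ 0`, while
`[g(∂₀), x⁰] = g'(∂₀)`. Writing `T_r = F(∂₀)` with `F(t) = (1 + irh t)^{-1/r}`, the binomial
coefficients satisfy `(1 + irh t) F'(t) = -ih F(t)` coefficientwise. Since
`x̂⁰_r = x⁰ (1 + irh ∂₀)` and `[x⁰, F(∂₀)] = -F'(∂₀)`, this yields `[x̂⁰_r, T_r] = ih T_r`, and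
with it the κ-Minkowski relation. The other relations follow from the Leibniz rule for
commutators.
-/

open MvPolynomial

noncomputable section

/-- The multiplication-by-`x^μ` operator on `ℂ[x⁰,x¹,x²,x³]`. -/
def Xop (μ : Fin 4) : Module.End ℂ (MvPolynomial (Fin 4) ℂ) :=
  LinearMap.mulLeft ℂ (X μ)

/-- The partial-derivative operator `∂_μ` on `ℂ[x⁰,x¹,x²,x³]`. -/
def Dop (μ : Fin 4) : Module.End ℂ (MvPolynomial (Fin 4) ℂ) :=
  (pderiv μ).toLinearMap

/-- The momentum operator `p_μ := −i∂_μ`. -/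
def Pop (μ : Fin 4) : Module.End ℂ (MvPolynomial (Fin 4) ℂ) :=
  (-Complex.I) • Dop μ

/-- The operator `Σ_{n≥0} g n • ∂₀ⁿ` on `ℂ[x⁰,x¹,x²,x³]`; it is well defined since `∂₀` is
locally nilpotent on polynomials (on the monomial `x^m` only the terms with `n ≤ m 0` are
nonzero, so the series reduces to the indicated finite sum on each basis monomial). -/
def seriesOp (g : ℕ → ℂ) : Module.End ℂ (MvPolynomial (Fin 4) ℂ) :=
  (basisMonomials (Fin 4) ℂ).constr ℂ fun m : Fin 4 →₀ ℕ =>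
    ∑ n ∈ Finset.range (m 0 + 1), g n • (Dop 0 ^ n) (monomial m 1)

/-- The generalized binomial coefficient `binom(α, n) = α(α−1)⋯(α−n+1)/n!`. -/
def binomC (α : ℂ) (n : ℕ) : ℂ :=
  (∏ k ∈ Finset.range n, (α - k)) / (n.factorial : ℂ)

/-- `T_r := (1 − rh·p₀)^{−1/r} = Σ_{n≥0} binom(−1/r, n)·(−rh)ⁿ·p₀ⁿ`, with `p₀ⁿ = (−i)ⁿ∂₀ⁿ`. -/
def Trop (r h : ℂ) : Module.End ℂ (MvPolynomial (Fin 4) ℂ) :=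
  seriesOp fun n => binomC (-1 / r) n * (-(r * h)) ^ n * (-Complex.I) ^ n

/-- `x̂⁰_r := x⁰ ∘ (1 − rh·p₀)`. -/
def xhat0J (r h : ℂ) : Module.End ℂ (MvPolynomial (Fin 4) ℂ) :=
  Xop 0 * (1 - (r * h) • Pop 0)

/-- `x̂^j_r := x^j ∘ T_r`. -/
def xhatJ (r h : ℂ) (j : Fin 4) : Module.End ℂ (MvPolynomial (Fin 4) ℂ) :=
  Xop j * Trop r h

namespace Ring

variable {R : Type*} [Ring R]

theorem mul_lie (a b c : R) : ⁅a * b, c⁆ = a * ⁅b, c⁆ + ⁅a, c⁆ * b := by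
  simp only [lie_def]; noncomm_ring

theorem lie_mul (a b c : R) : ⁅a, b * c⁆ = b * ⁅a, c⁆ + ⁅a, b⁆ * c := by
  simp only [lie_def]; noncomm_ring

theorem pow_succ_lie_of_lie_eq_one {d x : R} (h : ⁅d, x⁆ = 1) (n : ℕ) :
    ⁅d ^ (n + 1), x⁆ = (n + 1) • d ^ n := by
  induction n with
  | zero => simpa using h
  | succ n ih =>
    rw [pow_succ', mul_lie, ih, h, one_mul, mul_smul_comm, ← pow_succ', succ_nsmul _ (n + 1)]

end Ring

theorem Module.End.sum_smul_pow_apply_eq_of_pow_apply_eq_zero {R M : Type*} [CommSemiring R]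
    [AddCommMonoid M] [Module R M] {f : Module.End R M} {v : M} {N N' : ℕ}
    (hN : (f ^ N) v = 0) (hN' : N ≤ N') (g : ℕ → R) :
    ∑ n ∈ Finset.range N', g n • (f ^ n) v = ∑ n ∈ Finset.range N, g n • (f ^ n) v := by
  refine (Finset.sum_subset (Finset.range_subset_range.2 hN') fun n _ hn => ?_).symm
  rw [← Nat.sub_add_cancel (not_lt.1 (Finset.mem_range.not.1 hn)), pow_add, Module.End.mul_apply,
    hN, map_zero, smul_zero]

theorem commute_Xop_Xop (μ ν : Fin 4) : Commute (Xop μ) (Xop ν) :=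
  LinearMap.ext fun p => by simp [Xop, mul_left_comm]

theorem commute_Dop_Dop (μ ν : Fin 4) : Commute (Dop μ) (Dop ν) := by
  have h : ⁅pderiv μ, pderiv ν⁆ = (0 : Derivation ℂ (MvPolynomial (Fin 4) ℂ) _) :=
    derivation_ext fun i => by
      rw [Derivation.commutator_apply, pderiv_X, pderiv_X]
      simp only [Pi.single_apply]
      split_ifs <;> simp
  exact commute_iff_lie_eq.2 (by rw [Dop, Dop, ← Derivation.commutator_coe_linear_map, h]; rfl)

theorem lie_Dop_Xop (μ ν : Fin 4) : ⁅Dop μ, Xop ν⁆ = if μ = ν then 1 else 0 := by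
  refine LinearMap.ext fun p => ?_
  split_ifs with h <;> simp [Ring.lie_def, Dop, Xop, pderiv_X, h]

theorem lie_Xop_Pop (μ ν : Fin 4) :
    ⁅Xop μ, Pop ν⁆ = if μ = ν then Complex.I • 1 else 0 := by
  calc ⁅Xop μ, Pop ν⁆ = Complex.I • ⁅Dop ν, Xop μ⁆ := by
        simp only [Ring.lie_def, Pop, mul_smul_comm, smul_mul_assoc]; module
    _ = _ := by rw [lie_Dop_Xop]; split_ifs <;> simp_all

theorem commute_Pop_Pop (μ ν : Fin 4) : Commute (Pop μ) (Pop ν) :=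
  ((commute_Dop_Dop μ ν).smul_left _).smul_right _

theorem commute_Xop_Pop {μ ν : Fin 4} (h : μ ≠ ν) : Commute (Xop μ) (Pop ν) :=
  commute_iff_lie_eq.2 (by rw [lie_Xop_Pop, if_neg h])

theorem Dop_zero_pow_monomial_eq_zero {n : ℕ} {m : Fin 4 →₀ ℕ} (hm : m 0 < n) (a : ℂ) :
    (Dop 0 ^ n) (monomial m a) = 0 := by
  induction n generalizing m a with
  | zero => exact absurd hm (Nat.not_lt_zero _)
  | succ n ih =>
    rw [pow_succ, Module.End.mul_apply]
    change (Dop 0 ^ n) (pderiv 0 (monomial m a)) = 0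
    rw [pderiv_monomial]
    rcases Nat.eq_zero_or_pos (m 0) with hm0 | hm0
    · rw [hm0, Nat.cast_zero, mul_zero, monomial_zero, map_zero]
    · exact ih (by rw [Finsupp.tsub_apply, Finsupp.single_eq_same]; omega) _

theorem Dop_zero_pow_apply_of_degreeOf_lt {p : MvPolynomial (Fin 4) ℂ} {N : ℕ}
    (hN : degreeOf 0 p < N) : (Dop 0 ^ N) p = 0 := by
  rw [p.as_sum, map_sum]
  exact Finset.sum_eq_zero fun m hm =>
    Dop_zero_pow_monomial_eq_zero ((monomial_le_degreeOf 0 hm).trans_lt hN) _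

theorem seriesOp_monomial (g : ℕ → ℂ) (m : Fin 4 →₀ ℕ) :
    seriesOp g (monomial m 1) =
      ∑ n ∈ Finset.range (m 0 + 1), g n • (Dop 0 ^ n) (monomial m 1) := by
  have h := (basisMonomials (Fin 4) ℂ).constr_basis ℂ
    (fun m : Fin 4 →₀ ℕ => ∑ n ∈ Finset.range (m 0 + 1), g n • (Dop 0 ^ n) (monomial m 1)) m
  rwa [coe_basisMonomials] at h

theorem seriesOp_apply_of_degreeOf_lt (g : ℕ → ℂ) {p : MvPolynomial (Fin 4) ℂ} {N : ℕ}
    (hN : degreeOf 0 p < N) : seriesOp g p = ∑ n ∈ Finset.range N, g n • (Dop 0 ^ n) p := by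
  rw [p.as_sum]
  simp_rw [map_sum, Finset.smul_sum]
  rw [Finset.sum_comm]
  refine Finset.sum_congr rfl fun m hm => ?_
  have hm1 : monomial m (coeff m p) = coeff m p • monomial m 1 := by
    rw [smul_monomial, smul_eq_mul, mul_one]
  simp_rw [hm1, map_smul, smul_comm (g _), ← Finset.smul_sum, seriesOp_monomial]
  rw [Module.End.sum_smul_pow_apply_eq_of_pow_apply_eq_zero
    (Dop_zero_pow_monomial_eq_zero (Nat.lt_succ_self _) 1)
    (Nat.succ_le_of_lt ((monomial_le_degreeOf 0 hm).trans_lt hN))]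

theorem seriesOp_apply_of_pow_apply_eq_zero (g : ℕ → ℂ) {p : MvPolynomial (Fin 4) ℂ} {N : ℕ}
    (hN : (Dop 0 ^ N) p = 0) : seriesOp g p = ∑ n ∈ Finset.range N, g n • (Dop 0 ^ n) p := by
  have hdeg : degreeOf 0 p < degreeOf 0 p + 1 + N := by omega
  rw [seriesOp_apply_of_degreeOf_lt g hdeg,
    Module.End.sum_smul_pow_apply_eq_of_pow_apply_eq_zero hN (Nat.le_add_left _ _)]

theorem seriesOp_add (g₁ g₂ : ℕ → ℂ) : seriesOp (g₁ + g₂) = seriesOp g₁ + seriesOp g₂ :=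
  LinearMap.ext fun p => by
    simp only [seriesOp_apply_of_degreeOf_lt _ (lt_add_one (degreeOf 0 p)), Pi.add_apply,
      add_smul, Finset.sum_add_distrib, LinearMap.add_apply]

theorem seriesOp_smul (a : ℂ) (g : ℕ → ℂ) : seriesOp (a • g) = a • seriesOp g :=
  LinearMap.ext fun p => by
    simp only [seriesOp_apply_of_degreeOf_lt _ (lt_add_one (degreeOf 0 p)), Pi.smul_apply,
      smul_eq_mul, mul_smul, Finset.smul_sum, LinearMap.smul_apply]

theorem commute_seriesOp_of_commute (g : ℕ → ℂ) {S : Module.End ℂ (MvPolynomial (Fin 4) ℂ)}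
    (hS : Commute (Dop 0) S) : Commute (seriesOp g) S := by
  refine LinearMap.ext fun p => ?_
  have hp := Dop_zero_pow_apply_of_degreeOf_lt (lt_add_one (degreeOf 0 p))
  have hSp : (Dop 0 ^ (degreeOf 0 p + 1)) (S p) = 0 := by
    rw [← Module.End.mul_apply, (hS.pow_left _).eq, Module.End.mul_apply, hp, map_zero]
  rw [Module.End.mul_apply, Module.End.mul_apply, seriesOp_apply_of_pow_apply_eq_zero g hp,
    seriesOp_apply_of_pow_apply_eq_zero g hSp, map_sum]
  simp only [map_smul, ← Module.End.mul_apply, (hS.pow_left _).eq]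

theorem lie_Dop_zero_pow_succ_Xop_zero (n : ℕ) :
    ⁅Dop 0 ^ (n + 1), Xop 0⁆ = (n + 1) • Dop 0 ^ n :=
  Ring.pow_succ_lie_of_lie_eq_one (by rw [lie_Dop_Xop, if_pos rfl]) n

theorem lie_seriesOp_Xop_zero (g : ℕ → ℂ) :
    ⁅seriesOp g, Xop 0⁆ = seriesOp fun n => (n + 1) * g (n + 1) := by
  refine LinearMap.ext fun p => ?_
  have hp : degreeOf 0 p < degreeOf 0 p + 1 + 1 := by omega
  have hXp : degreeOf 0 (Xop 0 p) < degreeOf 0 p + 1 + 1 :=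
    (degreeOf_mul_le 0 _ _).trans_lt (by simp; omega)
  calc ⁅seriesOp g, Xop 0⁆ p
      = ∑ n ∈ Finset.range (degreeOf 0 p + 1 + 1), g n • ⁅Dop 0 ^ n, Xop 0⁆ p := by
        rw [Ring.lie_def, LinearMap.sub_apply, Module.End.mul_apply, Module.End.mul_apply,
          seriesOp_apply_of_degreeOf_lt g hXp, seriesOp_apply_of_degreeOf_lt g hp, map_sum,
          ← Finset.sum_sub_distrib]
        simp only [map_smul, Ring.lie_def, LinearMap.sub_apply, Module.End.mul_apply, smul_sub]
    _ = ∑ n ∈ Finset.range (degreeOf 0 p + 1), ((n + 1) * g (n + 1)) • (Dop 0 ^ n) p := by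
        have hlie_one : ⁅(1 : Module.End ℂ (MvPolynomial (Fin 4) ℂ)), Xop 0⁆ = 0 :=
          (Commute.one_left _).lie_eq
        rw [Finset.sum_range_succ', pow_zero, hlie_one, LinearMap.zero_apply, smul_zero, add_zero]
        refine Finset.sum_congr rfl fun n _ => ?_
        rw [lie_Dop_zero_pow_succ_Xop_zero, LinearMap.smul_apply, ← Nat.cast_smul_eq_nsmul ℂ,
          smul_smul, mul_comm]
        push_cast; rfl
    _ = _ := (seriesOp_apply_of_degreeOf_lt _ (lt_add_one _)).symm

theorem seriesOp_eq_smul_one_add_Dop_zero_mul (g : ℕ → ℂ) :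
    seriesOp g = g 0 • 1 + Dop 0 * seriesOp fun n => g (n + 1) := by
  refine LinearMap.ext fun p => ?_
  rw [LinearMap.add_apply, Module.End.mul_apply,
    seriesOp_apply_of_degreeOf_lt g (by omega : degreeOf 0 p < degreeOf 0 p + 1 + 1),
    seriesOp_apply_of_degreeOf_lt _ (lt_add_one (degreeOf 0 p)), Finset.sum_range_succ', map_sum]
  simp only [map_smul, ← Module.End.mul_apply, ← pow_succ', pow_zero, LinearMap.smul_apply,
    Module.End.one_apply, add_comm]

theorem binomC_succ (α : ℂ) (n : ℕ) :
    ((n : ℂ) + 1) * binomC α (n + 1) = (α - n) * binomC α n := by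
  have hfact : ((n.factorial : ℕ) : ℂ) ≠ 0 := Nat.cast_ne_zero.2 n.factorial_ne_zero
  rw [binomC, binomC, Finset.prod_range_succ, Nat.factorial_succ, Nat.cast_mul]
  field_simp
  push_cast
  ring

theorem seriesOp_binomial_deriv_mul_one_add_smul (α c : ℂ) :
    (seriesOp fun n => (n + 1) * (binomC α (n + 1) * c ^ (n + 1))) * (1 + c • Dop 0) =
      (α * c) • seriesOp fun n => binomC α n * c ^ n := by
  have hD : (Dop 0 * seriesOp fun n => (n + 1) * (binomC α (n + 1) * c ^ (n + 1))) =
      seriesOp fun n => n * (binomC α n * c ^ n) := by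
    rw [seriesOp_eq_smul_one_add_Dop_zero_mul fun n => n * (binomC α n * c ^ n)]
    simp
  rw [mul_add, mul_one, mul_smul_comm,
    (commute_seriesOp_of_commute _ (Commute.refl (Dop 0))).eq, hD, ← seriesOp_smul,
    ← seriesOp_add, ← seriesOp_smul]
  congr 1
  funext n
  simp only [Pi.add_apply, Pi.smul_apply, smul_eq_mul]
  linear_combination c ^ (n + 1) * binomC_succ α n

theorem Trop_eq_seriesOp (r h : ℂ) :
    Trop r h = seriesOp fun n => binomC (-1 / r) n * (Complex.I * r * h) ^ n := by
  rw [Trop]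
  congr 1
  funext n
  rw [mul_assoc, ← mul_pow]
  ring_nf

theorem one_sub_smul_Pop_zero (r h : ℂ) :
    1 - (r * h) • Pop 0 = 1 + (Complex.I * r * h) • Dop 0 := by
  rw [Pop, smul_smul, sub_eq_add_neg, ← neg_smul]
  ring_nf

theorem commute_Trop_Xop (r h : ℂ) {j : Fin 4} (hj : j ≠ 0) : Commute (Trop r h) (Xop j) :=
  commute_seriesOp_of_commute _ (commute_iff_lie_eq.2 (by rw [lie_Dop_Xop, if_neg hj.symm]))

theorem commute_Trop_Pop (r h : ℂ) (μ : Fin 4) : Commute (Trop r h) (Pop μ) :=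
  commute_seriesOp_of_commute _ ((commute_Dop_Dop 0 μ).smul_right _)

theorem lie_xhat0J_Trop (r h : ℂ) (hr : r ≠ 0) :
    ⁅xhat0J r h, Trop r h⁆ = (Complex.I * h) • Trop r h := by
  have hA : Commute (1 - (r * h) • Pop 0) (Trop r h) :=
    (Commute.one_left _).sub_left ((commute_Trop_Pop r h 0).symm.smul_left _)
  have hskew : ⁅Xop 0, Trop r h⁆ = -⁅Trop r h, Xop 0⁆ := by
    rw [Ring.lie_def, Ring.lie_def, neg_sub]
  have hαc : -1 / r * (Complex.I * r * h) = -(Complex.I * h) := by field_simp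
  rw [xhat0J, Ring.mul_lie, hA.lie_eq, mul_zero, zero_add, hskew, neg_mul ⁅Trop r h, Xop 0⁆,
    Trop_eq_seriesOp, lie_seriesOp_Xop_zero, one_sub_smul_Pop_zero,
    seriesOp_binomial_deriv_mul_one_add_smul, hαc]
  module

theorem lie_xhat0J_xhatJ (r h : ℂ) (hr : r ≠ 0) {j : Fin 4} (hj : j ≠ 0) :
    ⁅xhat0J r h, xhatJ r h j⁆ = (Complex.I * h) • xhatJ r h j := by
  have hX : Commute (xhat0J r h) (Xop j) :=
    (commute_Xop_Xop 0 j).mul_left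
      ((Commute.one_left _).sub_left ((commute_Xop_Pop hj).symm.smul_left _))
  rw [xhatJ, Ring.lie_mul, hX.lie_eq, zero_mul, add_zero, lie_xhat0J_Trop r h hr, mul_smul_comm]

theorem commute_xhatJ_xhatJ (r h : ℂ) {j k : Fin 4} (hj : j ≠ 0) (hk : k ≠ 0) :
    Commute (xhatJ r h j) (xhatJ r h k) :=
  ((commute_Xop_Xop j k).mul_right (commute_Trop_Xop r h hj).symm).mul_left
    ((commute_Trop_Xop r h hk).mul_right (Commute.refl _))

theorem lie_xhat0J_Pop_zero (r h : ℂ) :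
    ⁅xhat0J r h, Pop 0⁆ = Complex.I • (1 - (r * h) • Pop 0) := by
  have hA : Commute (1 - (r * h) • Pop 0) (Pop 0) :=
    (Commute.one_left _).sub_left ((Commute.refl _).smul_left _)
  rw [xhat0J, Ring.mul_lie, hA.lie_eq, mul_zero, zero_add, lie_Xop_Pop, if_pos rfl,
    smul_mul_assoc, one_mul]

theorem lie_xhatJ_Pop (r h : ℂ) (j k : Fin 4) :
    ⁅xhatJ r h j, Pop k⁆ = if j = k then Complex.I • Trop r h else 0 := by
  rw [xhatJ, Ring.mul_lie, (commute_Trop_Pop r h k).lie_eq, mul_zero, zero_add, lie_Xop_Pop]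
  split_ifs <;> simp

theorem commute_xhat0J_Pop (r h : ℂ) {k : Fin 4} (hk : k ≠ 0) : Commute (xhat0J r h) (Pop k) :=
  (commute_Xop_Pop hk.symm).mul_left
    ((Commute.one_left _).sub_left ((commute_Pop_Pop 0 k).smul_left _))

theorem commute_xhatJ_Pop_zero (r h : ℂ) {j : Fin 4} (hj : j ≠ 0) :
    Commute (xhatJ r h j) (Pop 0) :=
  (commute_Xop_Pop hj).mul_left (commute_Trop_Pop r h 0)

/-- The Jordanian-twist family of Heisenberg realizations of κ-Minkowski spacetime together
with the r-deformed phase-space (deformed Weyl algebra) relations. -/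
theorem jordanian_realization_kappa_minkowski (r h : ℂ) (hr : r ≠ 0) :
    -- (a) κ-Minkowski relations
    (∀ j ∈ ({1, 2, 3} : Finset (Fin 4)),
      xhat0J r h * xhatJ r h j - xhatJ r h j * xhat0J r h
        = (Complex.I * h) • xhatJ r h j) ∧
    (∀ j ∈ ({1, 2, 3} : Finset (Fin 4)), ∀ k ∈ ({1, 2, 3} : Finset (Fin 4)),
      xhatJ r h j * xhatJ r h k - xhatJ r h k * xhatJ r h j = 0) ∧
    -- (b) r-deformed phase-space relations
    (xhat0J r h * Pop 0 - Pop 0 * xhat0J r h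
        = Complex.I • (1 - (r * h) • Pop 0)) ∧
    (∀ j ∈ ({1, 2, 3} : Finset (Fin 4)), ∀ k ∈ ({1, 2, 3} : Finset (Fin 4)),
      xhatJ r h j * Pop k - Pop k * xhatJ r h j
        = if j = k then Complex.I • Trop r h else 0) ∧
    (∀ k ∈ ({1, 2, 3} : Finset (Fin 4)),
      xhat0J r h * Pop k - Pop k * xhat0J r h = 0) ∧
    (∀ j ∈ ({1, 2, 3} : Finset (Fin 4)),
      xhatJ r h j * Pop 0 - Pop 0 * xhatJ r h j = 0) := by
  have ne_zero : ∀ j ∈ ({1, 2, 3} : Finset (Fin 4)), j ≠ 0 := by decide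
  exact ⟨fun j hj => lie_xhat0J_xhatJ r h hr (ne_zero j hj),
    fun j hj k hk => (commute_xhatJ_xhatJ r h (ne_zero j hj) (ne_zero k hk)).lie_eq,
    lie_xhat0J_Pop_zero r h,
    fun j _ k _ => lie_xhatJ_Pop r h j k,
    fun k hk => (commute_xhat0J_Pop r h (ne_zero k hk)).lie_eq,
    fun j hj => (commute_xhatJ_Pop_zero r h (ne_zero j hj)).lie_eq⟩

end
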